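/- arXiv:2209.13481 — 6 statements merged into one kernel-verified Lean document; each statement's English description precedes it below -/
import Mathlib

section
/- If γ₁²-4ω₁² > 0, γ₂²-4ω₂² > 0, and 8(ω₁²+ω₂²) < (γ₁+γ₂)², then there exists K > 0 such that for all k > K the matrix Q(k) has exactly two distinct real eigenvalues and one pair of non-real complex conjugate eigenvalues. -/
/-!
The characteristic polynomial of `Q(k)` is
`(x² + γ₁x + ω₁²)(x² + γ₂x + ω₂²) + k (2x² + (γ₁ + γ₂)x + ω₁² + ω₂²)`.
For large `k` its sign at a fixed point is that of the coupling term
`2x² + (γ₁ + γ₂)x + ω₁² + ω₂²`, which is positive at `-(γ₁ + γ₂)/2` and at `0` and, because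
`8(ω₁² + ω₂²) < (γ₁ + γ₂)²`, negative at its vertex `-(γ₁ + γ₂)/4`: this gives two real roots.
The squares of the four complex roots sum to `(γ₁ + γ₂)² - 2(ω₁² + ω₂² + γ₁γ₂ + 2k)`, which is
negative for large `k`, so some root `z` is not real; then `z` and `z̄` are two roots outside `ℝ`,
leaving room for at most two real ones.
-/

open Polynomial Filter ComplexConjugate

theorem Multiset.sum_map_sq_eq_sq_sum_sub_two_mul_esymm {R : Type*} [CommRing R]
    (s : Multiset R) : (s.map (· ^ 2)).sum = s.sum ^ 2 - 2 * s.esymm 2 := by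
  induction s using Multiset.induction_on with
  | empty => simp [Multiset.esymm, Multiset.powersetCard_zero_right 1]
  | cons a s ih =>
    have hesymm : (a ::ₘ s).esymm 2 = s.esymm 2 + a * s.sum := by
      simpa [Multiset.esymm, Multiset.powersetCard_cons, Multiset.powersetCard_one]
        using Multiset.sum_map_mul_left (s := s) (a := a) (f := id)
    rw [Multiset.map_cons, Multiset.sum_cons, Multiset.sum_cons, hesymm, ih]
    ring

theorem Polynomial.exists_im_ne_zero_aeval_eq_zero_of_coeff_sq_lt {p : ℝ[X]} {n : ℕ}
    (hp : p.Monic) (hdeg : p.natDegree = n + 2) (h : p.coeff (n + 1) ^ 2 < 2 * p.coeff n) :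
    ∃ z : ℂ, z.im ≠ 0 ∧ aeval z p = 0 := by
  set q := p.map (algebraMap ℝ ℂ)
  have hq : q.Monic := hp.map _
  have hqdeg : q.natDegree = n + 2 := by rw [hp.natDegree_map, hdeg]
  have hcard : Multiset.card q.roots = q.natDegree := IsAlgClosed.card_roots_eq_natDegree
  have hsum : q.roots.sum = -(p.coeff (n + 1) : ℂ) := by
    have := coeff_eq_esymm_roots_of_card hcard (k := n + 1) (by omega)
    simp_all [q, Multiset.esymm, Multiset.powersetCard_one]
  have hesymm : q.roots.esymm 2 = (p.coeff n : ℂ) := by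
    have := coeff_eq_esymm_roots_of_card hcard (k := n) (by omega)
    simp_all [q]
  by_contra! hreal
  have hsq_nonneg : 0 ≤ ((q.roots.map (· ^ 2)).sum).re := by
    rw [show ∀ w : ℂ, w.re = Complex.reAddGroupHom w from fun _ => rfl, map_multiset_sum,
      Multiset.map_map]
    refine Multiset.sum_nonneg fun x hx => ?_
    obtain ⟨z, hz, rfl⟩ := Multiset.mem_map.mp hx
    have hzim : z.im = 0 := by
      by_contra hne
      exact hreal z hne (by simpa [q, aeval_def, eval_map] using (mem_roots hq.ne_zero).mp hz)
    simp [pow_two, hzim, mul_self_nonneg]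
  rw [Multiset.sum_map_sq_eq_sq_sum_sub_two_mul_esymm, hsum, hesymm] at hsq_nonneg
  have hre : ((-(p.coeff (n + 1) : ℂ)) ^ 2 - 2 * p.coeff n).re =
      p.coeff (n + 1) ^ 2 - 2 * p.coeff n := by
    simp [pow_two]
  linarith

theorem Polynomial.two_le_natDegree_of_aeval_eq_zero {p : ℝ[X]} (hp : p ≠ 0) {z : ℂ}
    (hz : z.im ≠ 0) (h : aeval z p = 0) : 2 ≤ p.natDegree := by
  set q := p.map (algebraMap ℝ ℂ) with hq_def
  have hq : q ≠ 0 := Polynomial.map_ne_zero hp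
  have hconj : conj z ≠ z := fun h => hz (Complex.conj_eq_iff_im.mp h)
  have hroots : ({z, conj z} : Multiset ℂ) ≤ q.roots := by
    refine (Multiset.le_iff_subset (by simpa using hconj.symm)).mpr ?_
    intro w hw
    rw [mem_roots hq, IsRoot, hq_def, eval_map, ← aeval_def]
    rcases Multiset.mem_cons.mp hw with rfl | hw
    · exact h
    · rw [Multiset.mem_singleton.mp hw, aeval_conj, h, map_zero]
  calc 2 = Multiset.card ({z, conj z} : Multiset ℂ) := rfl
    _ ≤ Multiset.card q.roots := Multiset.card_le_card hroots
    _ ≤ q.natDegree := card_roots' q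
    _ = p.natDegree := natDegree_map _

theorem Polynomial.card_roots_add_two_le_natDegree {p : ℝ[X]} (hp : p ≠ 0) {z : ℂ}
    (hz : z.im ≠ 0) (h : aeval z p = 0) : Multiset.card p.roots + 2 ≤ p.natDegree := by
  obtain ⟨q, hpq, hdeg, -⟩ := exists_prod_multiset_X_sub_C_mul p
  have hprod : aeval z (p.roots.map fun a => X - C a).prod ≠ 0 := by
    rw [map_multiset_prod, Multiset.map_map]
    refine Multiset.prod_ne_zero fun h0 => ?_
    obtain ⟨x, -, hx⟩ := Multiset.mem_map.mp h0
    apply hz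
    simpa [sub_eq_zero] using congrArg Complex.im hx
  have hq : aeval z q = 0 := by
    rw [← hpq, map_mul] at h
    exact (mul_eq_zero.mp h).resolve_left hprod
  have hq0 : q ≠ 0 := by rintro rfl; exact hp (by simpa using hpq.symm)
  have := two_le_natDegree_of_aeval_eq_zero hq0 hz hq
  omega

theorem Polynomial.card_roots_toFinset_eq_two {p : ℝ[X]} (hdeg : p.natDegree = 4) {x₁ x₂ : ℝ}
    (hx : x₁ ≠ x₂) (h₁ : p.IsRoot x₁) (h₂ : p.IsRoot x₂) {z : ℂ} (hz : z.im ≠ 0)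
    (h : aeval z p = 0) : p.roots.toFinset.card = 2 := by
  have hp : p ≠ 0 := ne_zero_of_natDegree_gt (n := 0) (by omega)
  have hsub : {x₁, x₂} ⊆ p.roots.toFinset := by
    simpa [Finset.insert_subset_iff, mem_roots hp] using ⟨h₁, h₂⟩
  have := card_roots_add_two_le_natDegree hp hz h
  have := Multiset.toFinset_card_le p.roots
  have := Finset.card_le_card hsub
  rw [Finset.card_pair hx] at this
  omega

theorem Polynomial.exists_ne_isRoot_of_eval_pos_neg_pos {p : ℝ[X]} {a b c : ℝ} (hab : a ≤ b)
    (hbc : b ≤ c) (ha : 0 < p.eval a) (hb : p.eval b < 0) (hc : 0 < p.eval c) :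
    ∃ x₁ x₂, x₁ ≠ x₂ ∧ p.IsRoot x₁ ∧ p.IsRoot x₂ := by
  obtain ⟨x₁, hx₁, h₁⟩ := intermediate_value_Ioo' hab p.continuous.continuousOn ⟨hb, ha⟩
  obtain ⟨x₂, hx₂, h₂⟩ := intermediate_value_Ioo hbc p.continuous.continuousOn ⟨hb, hc⟩
  exact ⟨x₁, x₂, (hx₁.2.trans hx₂.1).ne, h₁, h₂⟩

def couplingMatrix (ω₁ ω₂ γ₁ γ₂ k : ℝ) : Matrix (Fin 4) (Fin 4) ℝ :=
  !![0, 1, 0, 0;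
     -ω₁^2 - k, -γ₁, k, 0;
     0, 0, 0, 1;
     k, 0, -ω₂^2 - k, -γ₂]

theorem charpoly_couplingMatrix (ω₁ ω₂ γ₁ γ₂ k : ℝ) :
    (couplingMatrix ω₁ ω₂ γ₁ γ₂ k).charpoly = X ^ 4 + C (γ₁ + γ₂) * X ^ 3
      + C (ω₁ ^ 2 + ω₂ ^ 2 + γ₁ * γ₂ + 2 * k) * X ^ 2
      + C (γ₁ * (ω₂ ^ 2 + k) + γ₂ * (ω₁ ^ 2 + k)) * X
      + C (ω₁ ^ 2 * ω₂ ^ 2 + k * (ω₁ ^ 2 + ω₂ ^ 2)) := by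
  simp [couplingMatrix, Matrix.charpoly, Matrix.det_succ_row_zero, Fin.sum_univ_succ,
    Matrix.charmatrix_apply, Fin.succAbove, C_ofNat]
  ring

theorem eval_charpoly_couplingMatrix (ω₁ ω₂ γ₁ γ₂ k x : ℝ) :
    (couplingMatrix ω₁ ω₂ γ₁ γ₂ k).charpoly.eval x =
      (x ^ 2 + γ₁ * x + ω₁ ^ 2) * (x ^ 2 + γ₂ * x + ω₂ ^ 2)
        + k * (2 * x ^ 2 + (γ₁ + γ₂) * x + (ω₁ ^ 2 + ω₂ ^ 2)) := by
  rw [charpoly_couplingMatrix]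
  simp only [eval_add, eval_mul, eval_pow, eval_C, eval_X]
  ring

theorem natDegree_charpoly_couplingMatrix (ω₁ ω₂ γ₁ γ₂ k : ℝ) :
    (couplingMatrix ω₁ ω₂ γ₁ γ₂ k).charpoly.natDegree = 4 := by
  rw [Matrix.charpoly_natDegree_eq_dim, Fintype.card_fin]

theorem eventually_pos_add_mul_atTop (a : ℝ) {b : ℝ} (hb : 0 < b) :
    ∀ᶠ k in atTop, 0 < a + k * b :=
  (tendsto_atTop_add_const_left _ a (tendsto_id.atTop_mul_const hb)).eventually_gt_atTop 0

theorem eventually_exists_ne_isRoot_charpoly_couplingMatrix {ω₁ ω₂ γ₁ γ₂ : ℝ} (hω₁ : 0 < ω₁)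
    (hω₂ : 0 < ω₂) (hγ₁ : 0 < γ₁) (hγ₂ : 0 < γ₂) (h : 8 * (ω₁ ^ 2 + ω₂ ^ 2) < (γ₁ + γ₂) ^ 2) :
    ∀ᶠ k in atTop, ∃ x₁ x₂, x₁ ≠ x₂ ∧ (couplingMatrix ω₁ ω₂ γ₁ γ₂ k).charpoly.IsRoot x₁ ∧
      (couplingMatrix ω₁ ω₂ γ₁ γ₂ k).charpoly.IsRoot x₂ := by
  set g := γ₁ + γ₂
  set S := ω₁ ^ 2 + ω₂ ^ 2
  have hg : 0 < g := by positivity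
  have hS : 0 < S := by positivity
  have hgap : 0 < g ^ 2 / 8 - S := by linarith
  let P (x : ℝ) := (x ^ 2 + γ₁ * x + ω₁ ^ 2) * (x ^ 2 + γ₂ * x + ω₂ ^ 2)
  filter_upwards [eventually_pos_add_mul_atTop (P (-(g / 2))) hS,
    eventually_pos_add_mul_atTop (-P (-(g / 4))) hgap,
    eventually_pos_add_mul_atTop (ω₁ ^ 2 * ω₂ ^ 2) hS] with k ha hb hc
  refine exists_ne_isRoot_of_eval_pos_neg_pos (a := -(g / 2)) (b := -(g / 4)) (c := 0)
    (by linarith) (by linarith) ?_ ?_ ?_ <;> rw [eval_charpoly_couplingMatrix]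
  · linear_combination ha
  · linear_combination hb
  · linear_combination hc

theorem eventually_exists_im_ne_zero_aeval_charpoly_couplingMatrix (ω₁ ω₂ γ₁ γ₂ : ℝ) :
    ∀ᶠ k in atTop, ∃ z : ℂ, z.im ≠ 0 ∧ aeval z (couplingMatrix ω₁ ω₂ γ₁ γ₂ k).charpoly = 0 := by
  filter_upwards [eventually_pos_add_mul_atTop
    (2 * (ω₁ ^ 2 + ω₂ ^ 2 + γ₁ * γ₂) - (γ₁ + γ₂) ^ 2) four_pos] with k hk
  refine exists_im_ne_zero_aeval_eq_zero_of_coeff_sq_lt (n := 2) (Matrix.charpoly_monic _)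
    (natDegree_charpoly_couplingMatrix ..) ?_
  rw [charpoly_couplingMatrix]
  simp only [coeff_add, coeff_C_mul, coeff_X_pow, coeff_X, coeff_C]
  norm_num
  linear_combination hk

theorem two_real_two_complex_eigenvalues_large_coupling_general
    (ω₁ ω₂ γ₁ γ₂ : ℝ) (hω₁ : 0 < ω₁) (hω₂ : 0 < ω₂) (hγ₁ : 0 < γ₁) (hγ₂ : 0 < γ₂)
    (h3 : 8*(ω₁^2 + ω₂^2) < (γ₁ + γ₂)^2) :
    ∃ K > (0:ℝ), ∀ k : ℝ, K < k →
      (Matrix.charpoly (!![0, 1, 0, 0;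
         -ω₁^2 - k, -γ₁, k, 0;
         0, 0, 0, 1;
         k, 0, -ω₂^2 - k, -γ₂] : Matrix (Fin 4) (Fin 4) ℝ)).roots.toFinset.card = 2 ∧
      ∃ z : ℂ, z.im ≠ 0 ∧
        aeval z (Matrix.charpoly (!![0, 1, 0, 0;
         -ω₁^2 - k, -γ₁, k, 0;
         0, 0, 0, 1;
         k, 0, -ω₂^2 - k, -γ₂] : Matrix (Fin 4) (Fin 4) ℝ)) = 0 ∧
        aeval ((starRingEnd ℂ) z) (Matrix.charpoly (!![0, 1, 0, 0;
         -ω₁^2 - k, -γ₁, k, 0;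
         0, 0, 0, 1;
         k, 0, -ω₂^2 - k, -γ₂] : Matrix (Fin 4) (Fin 4) ℝ)) = 0 := by
  obtain ⟨K, hK⟩ := eventually_atTop.1
    ((eventually_exists_ne_isRoot_charpoly_couplingMatrix hω₁ hω₂ hγ₁ hγ₂ h3).and
      (eventually_exists_im_ne_zero_aeval_charpoly_couplingMatrix ω₁ ω₂ γ₁ γ₂))
  refine ⟨max K 1, by positivity, fun k hk => ?_⟩
  obtain ⟨⟨x₁, x₂, hne, h₁, h₂⟩, z, hz, hzroot⟩ := hK k (le_max_left K 1 |>.trans hk.le)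
  refine ⟨card_roots_toFinset_eq_two (natDegree_charpoly_couplingMatrix ..) hne h₁ h₂ hz hzroot,
    z, hz, hzroot, ?_⟩
  rw [aeval_conj]
  exact (congrArg conj hzroot).trans (map_zero _)

theorem two_real_two_complex_eigenvalues_large_coupling
    (ω₁ ω₂ γ₁ γ₂ : ℝ) (hω₁ : 0 < ω₁) (hω₂ : 0 < ω₂) (hγ₁ : 0 < γ₁) (hγ₂ : 0 < γ₂)
    (h1 : γ₁^2 - 4*ω₁^2 > 0) (h2 : γ₂^2 - 4*ω₂^2 > 0)
    (h3 : 8*(ω₁^2 + ω₂^2) < (γ₁ + γ₂)^2) :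
    ∃ K > (0:ℝ), ∀ k : ℝ, K < k →
      (Matrix.charpoly (!![0, 1, 0, 0;
         -ω₁^2 - k, -γ₁, k, 0;
         0, 0, 0, 1;
         k, 0, -ω₂^2 - k, -γ₂] : Matrix (Fin 4) (Fin 4) ℝ)).roots.toFinset.card = 2 ∧
      ∃ z : ℂ, z.im ≠ 0 ∧
        aeval z (Matrix.charpoly (!![0, 1, 0, 0;
         -ω₁^2 - k, -γ₁, k, 0;
         0, 0, 0, 1;
         k, 0, -ω₂^2 - k, -γ₂] : Matrix (Fin 4) (Fin 4) ℝ)) = 0 ∧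
        aeval ((starRingEnd ℂ) z) (Matrix.charpoly (!![0, 1, 0, 0;
         -ω₁^2 - k, -γ₁, k, 0;
         0, 0, 0, 1;
         k, 0, -ω₂^2 - k, -γ₂] : Matrix (Fin 4) (Fin 4) ℝ)) = 0 :=
  two_real_two_complex_eigenvalues_large_coupling_general ω₁ ω₂ γ₁ γ₂ hω₁ hω₂ hγ₁ hγ₂ h3
end

section
/- If γ₁²-4ω₁² > 0, γ₂²-4ω₂² > 0, and 8(ω₁²+ω₂²) > (γ₁+γ₂)², then there exists K > 0 such that for all k > K the matrix Q(k) has two pairs of non-real complex conjugate eigenvalues (no real eigenvalues). -/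
open Polynomial

lemma charpoly_explicit {R : Type*} [CommRing R] (a b c d e f : R) :
    (Matrix.charpoly (!![(0:R),1,0,0; a,b,c,0; 0,0,0,1; d,0,e,f])) =
      (X^2 - C b * X - C a) * (X^2 - C f * X - C e) - C (c*d) := by
  rw [Matrix.charpoly]
  have h : Matrix.charmatrix (!![(0:R),1,0,0; a,b,c,0; 0,0,0,1; d,0,e,f]) =
      !![X, -1, 0, 0; -C a, X - C b, -C c, 0; 0, 0, X, -1; -C d, 0, -C e, X - C f] := by
    ext i j : 2
    fin_cases i <;> fin_cases j <;>
      simp [Matrix.charmatrix_apply_eq, Matrix.charmatrix_apply_ne, Matrix.vecHead, Matrix.vecTail]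
  rw [h]
  have h2 : (Fin.succAbove (1 : Fin 4) 2) = 3 := by decide
  simp [Matrix.det_succ_row_zero, Fin.sum_univ_succ, h2]
  ring

lemma coeffs_of_roots (a b e f g w1 w2 w3 w4 : ℂ)
    (H : ∀ x : ℂ, (x^2 - b*x - a) * (x^2 - f*x - e) - g = (x-w1)*(x-w2)*(x-w3)*(x-w4)) :
    w1+w2+w3+w4 = b + f ∧
    w1*w2+w1*w3+w1*w4+w2*w3+w2*w4+w3*w4 = b*f - a - e ∧
    w1*w2*w3*w4 = a*e - g := by
  refine ⟨?_, ?_, ?_⟩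
  · linear_combination ((1:ℂ)/12) * H 2 - (1/12) * H (-2) - (1/6) * H 1 + (1/6) * H (-1)
  · linear_combination (-(1:ℂ)/2) * H 1 - (1/2) * H (-1) + H 0
  · linear_combination -H 0

lemma neg_bounds (γ ω x : ℝ) (hγ : 0 < γ) (hω : 0 < ω) (h : x^2 + γ*x + ω^2 < 0) :
    -γ < x ∧ x < 0 ∧ x^2 + γ*x + ω^2 ≥ -(γ^2/4) := by
  refine ⟨by nlinarith, by nlinarith, by nlinarith [sq_nonneg (x + γ/2)]⟩

lemma prod_lb (ω₁ ω₂ γ₁ γ₂ x : ℝ) (hω₁ : 0 < ω₁) (hω₂ : 0 < ω₂) (hγ₁ : 0 < γ₁) (hγ₂ : 0 < γ₂) :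
    (x^2 + γ₁*x + ω₁^2) * (x^2 + γ₂*x + ω₂^2)
      ≥ -((γ₁^2/4)*(γ₁^2+ω₂^2) + (γ₂^2/4)*(γ₂^2+ω₁^2)) := by
  have hBpos : (0:ℝ) ≤ (γ₁^2/4)*(γ₁^2+ω₂^2) + (γ₂^2/4)*(γ₂^2+ω₁^2) := by positivity
  rcases le_or_gt 0 ((x^2 + γ₁*x + ω₁^2) * (x^2 + γ₂*x + ω₂^2)) with h | h
  · linarith
  · rcases mul_neg_iff.mp h with ⟨h1, h2⟩ | ⟨h1, h2⟩
    · obtain ⟨hxl, hxu, hb2⟩ := neg_bounds γ₂ ω₂ x hγ₂ hω₂ h2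
      have hb1 : x^2 + γ₁*x + ω₁^2 ≤ γ₂^2 + ω₁^2 := by nlinarith
      nlinarith [mul_nonneg (le_of_lt h1) (by linarith : (0:ℝ) ≤ (x^2 + γ₂*x + ω₂^2) + γ₂^2/4),
        mul_nonneg (by positivity : (0:ℝ) ≤ γ₂^2/4) (by linarith : (0:ℝ) ≤ γ₂^2 + ω₁^2 - (x^2 + γ₁*x + ω₁^2))]
    · obtain ⟨hxl, hxu, hb1⟩ := neg_bounds γ₁ ω₁ x hγ₁ hω₁ h1
      have hb2 : x^2 + γ₂*x + ω₂^2 ≤ γ₁^2 + ω₂^2 := by nlinarith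
      nlinarith [mul_nonneg (le_of_lt h2) (by linarith : (0:ℝ) ≤ (x^2 + γ₁*x + ω₁^2) + γ₁^2/4),
        mul_nonneg (by positivity : (0:ℝ) ≤ γ₁^2/4) (by linarith : (0:ℝ) ≤ γ₁^2 + ω₂^2 - (x^2 + γ₂*x + ω₂^2))]

lemma real_pos (ω₁ ω₂ γ₁ γ₂ k x : ℝ) (hω₁ : 0 < ω₁) (hω₂ : 0 < ω₂) (hγ₁ : 0 < γ₁) (hγ₂ : 0 < γ₂)
    (hkm : k * ((ω₁^2+ω₂^2) - (γ₁+γ₂)^2/8) > (γ₁^2/4)*(γ₁^2+ω₂^2) + (γ₂^2/4)*(γ₂^2+ω₁^2))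
    (hk : 0 < k) :
    0 < (x^2 + γ₁*x + (ω₁^2 + k)) * (x^2 + γ₂*x + (ω₂^2 + k)) - k^2 := by
  have hsum : (x^2 + γ₁*x + ω₁^2) + (x^2 + γ₂*x + ω₂^2) ≥ (ω₁^2+ω₂^2) - (γ₁+γ₂)^2/8 := by
    nlinarith [sq_nonneg (2*x + (γ₁+γ₂)/2)]
  have hprod := prod_lb ω₁ ω₂ γ₁ γ₂ x hω₁ hω₂ hγ₁ hγ₂
  have key : (x^2 + γ₁*x + (ω₁^2 + k)) * (x^2 + γ₂*x + (ω₂^2 + k)) - k^2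
      = k * ((x^2 + γ₁*x + ω₁^2) + (x^2 + γ₂*x + ω₂^2)) + (x^2 + γ₁*x + ω₁^2) * (x^2 + γ₂*x + ω₂^2) := by
    ring
  rw [key]
  nlinarith [mul_le_mul_of_nonneg_left hsum (le_of_lt hk)]

lemma quartic_factor (Q : ℂ[X]) (hm : Q.Monic) (hd : Q.natDegree = 4) (z z' : ℂ)
    (hz : Q.eval z = 0) (hz2 : Q.eval z' = 0) (hzz : z ≠ z') :
    ∃ w1 w2 : ℂ, Q = (X - C z) * (X - C z') * (X - C w1) * (X - C w2) := by
  have hQne : Q ≠ 0 := hm.ne_zero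
  obtain ⟨g1, hg1⟩ := dvd_iff_isRoot.mpr hz
  have hg1ne : g1 ≠ 0 := by rintro rfl; simp at hg1; exact hQne hg1
  have hg1z : g1.eval z' = 0 := by
    have h0 := hz2
    rw [hg1, eval_mul, eval_sub, eval_X, eval_C] at h0
    rcases mul_eq_zero.mp h0 with h | h
    · exact absurd (by linear_combination h) hzz.symm
    · exact h
  obtain ⟨g2, hg2⟩ := dvd_iff_isRoot.mpr hg1z
  have hg2ne : g2 ≠ 0 := by rintro rfl; simp at hg2; exact hg1ne hg2
  have hd1 : g1.natDegree = 3 := by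
    have := hd
    rw [hg1, natDegree_mul (X_sub_C_ne_zero z) hg1ne, natDegree_X_sub_C] at this
    omega
  have hd2 : g2.natDegree = 2 := by
    have := hd1
    rw [hg2, natDegree_mul (X_sub_C_ne_zero z') hg2ne, natDegree_X_sub_C] at this
    omega
  obtain ⟨w1, hw1⟩ := IsAlgClosed.exists_root g2
    (by rw [degree_eq_natDegree hg2ne, hd2]; decide)
  obtain ⟨g3, hg3⟩ := dvd_iff_isRoot.mpr hw1
  have hg3ne : g3 ≠ 0 := by rintro rfl; simp at hg3; exact hg2ne hg3
  have hd3 : g3.natDegree = 1 := by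
    have := hd2
    rw [hg3, natDegree_mul (X_sub_C_ne_zero w1) hg3ne, natDegree_X_sub_C] at this
    omega
  obtain ⟨w2, hw2⟩ := IsAlgClosed.exists_root g3
    (by rw [degree_eq_natDegree hg3ne, hd3]; decide)
  obtain ⟨g4, hg4⟩ := dvd_iff_isRoot.mpr hw2
  have hg4ne : g4 ≠ 0 := by rintro rfl; simp at hg4; exact hg3ne hg4
  have hd4 : g4.natDegree = 0 := by
    have := hd3
    rw [hg4, natDegree_mul (X_sub_C_ne_zero w2) hg4ne, natDegree_X_sub_C] at this
    omega
  have hc : g4 = C (g4.coeff 0) := eq_C_of_natDegree_eq_zero hd4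
  have hQfact : Q = (X - C z) * ((X - C z') * ((X - C w1) * ((X - C w2) * C (g4.coeff 0)))) := by
    rw [← hc, ← hg4, ← hg3, ← hg2, ← hg1]
  have hlc : g4.coeff 0 = 1 := by
    have h1 := hm.leadingCoeff
    rw [hQfact] at h1
    simp [leadingCoeff_mul, leadingCoeff_X_sub_C] at h1
    exact h1
  refine ⟨w1, w2, ?_⟩
  rw [hQfact, hlc, map_one, mul_one]
  ring

lemma final_contradiction (S P c0 k : ℝ) (hk : 1 + |2*c0 - S| + |c0^2 - P| < k)
    (heq : (k + c0)^2 = S*k + P) : False := by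
  have h1 : 0 ≤ |2*c0 - S| := abs_nonneg _
  have h2 : 0 ≤ |c0^2 - P| := abs_nonneg _
  have hk0 : 0 < k := by linarith
  nlinarith [le_abs_self (2*c0 - S), neg_abs_le (2*c0 - S),
    le_abs_self (c0^2 - P), neg_abs_le (c0^2 - P),
    mul_le_mul_of_nonneg_right (show |2*c0 - S| + |c0^2 - P| ≤ k - 1 by linarith) (le_of_lt hk0)]

lemma mixed_case (ω₁ ω₂ γ₁ γ₂ k : ℝ) (z : ℂ)
    (e3 : 2*(z + (starRingEnd ℂ) z) = -((γ₁:ℂ) + (γ₂:ℂ)))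
    (e2 : (z + (starRingEnd ℂ) z)^2 + 2*(z * (starRingEnd ℂ) z)
        = (γ₁:ℂ)*(γ₂:ℂ) + (ω₁:ℂ)^2 + (ω₂:ℂ)^2 + 2*(k:ℂ))
    (e0 : (z * (starRingEnd ℂ) z)^2 = ((ω₁:ℂ)^2+(k:ℂ))*((ω₂:ℂ)^2+(k:ℂ)) - (k:ℂ)^2) :
    (k + ((ω₁^2+ω₂^2+γ₁*γ₂)/2 - (γ₁+γ₂)^2/8))^2 = (ω₁^2+ω₂^2)*k + ω₁^2*ω₂^2 := by
  have key : ((k:ℂ) + (((ω₁:ℂ)^2+(ω₂:ℂ)^2+(γ₁:ℂ)*(γ₂:ℂ))/2 - ((γ₁:ℂ)+(γ₂:ℂ))^2/8))^2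
      = ((ω₁:ℂ)^2+(ω₂:ℂ)^2)*(k:ℂ) + (ω₁:ℂ)^2*(ω₂:ℂ)^2 := by
    linear_combination e0
      - (((k:ℂ) + (((ω₁:ℂ)^2+(ω₂:ℂ)^2+(γ₁:ℂ)*(γ₂:ℂ))/2 - ((γ₁:ℂ)+(γ₂:ℂ))^2/8) + z * (starRingEnd ℂ) z)/2) * e2
      + (((k:ℂ) + (((ω₁:ℂ)^2+(ω₂:ℂ)^2+(γ₁:ℂ)*(γ₂:ℂ))/2 - ((γ₁:ℂ)+(γ₂:ℂ))^2/8) + z * (starRingEnd ℂ) z)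
          * ((z + (starRingEnd ℂ) z) - ((γ₁:ℂ)+(γ₂:ℂ))/2)/4) * e3
  exact_mod_cast key

theorem two_complex_pairs_eigenvalues_large_coupling
    (ω₁ ω₂ γ₁ γ₂ : ℝ) (hω₁ : 0 < ω₁) (hω₂ : 0 < ω₂) (hγ₁ : 0 < γ₁) (hγ₂ : 0 < γ₂)
    (h1 : γ₁^2 - 4*ω₁^2 > 0) (h2 : γ₂^2 - 4*ω₂^2 > 0)
    (h3 : 8*(ω₁^2 + ω₂^2) > (γ₁ + γ₂)^2) :
    ∃ K > (0:ℝ), ∀ k : ℝ, K < k →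
      (∀ x : ℝ, (Matrix.charpoly (!![0, 1, 0, 0;
         -ω₁^2 - k, -γ₁, k, 0;
         0, 0, 0, 1;
         k, 0, -ω₂^2 - k, -γ₂] : Matrix (Fin 4) (Fin 4) ℝ)).eval x ≠ 0) ∧
      ∃ z w : ℂ, z.im ≠ 0 ∧ w.im ≠ 0 ∧ z ≠ w ∧ z ≠ (starRingEnd ℂ) w ∧
        aeval z (Matrix.charpoly (!![0, 1, 0, 0;
         -ω₁^2 - k, -γ₁, k, 0;
         0, 0, 0, 1;
         k, 0, -ω₂^2 - k, -γ₂] : Matrix (Fin 4) (Fin 4) ℝ)) = 0 ∧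
        aeval w (Matrix.charpoly (!![0, 1, 0, 0;
         -ω₁^2 - k, -γ₁, k, 0;
         0, 0, 0, 1;
         k, 0, -ω₂^2 - k, -γ₂] : Matrix (Fin 4) (Fin 4) ℝ)) = 0 := by
  have hmpos : 0 < (ω₁^2+ω₂^2) - (γ₁+γ₂)^2/8 := by linarith
  set c0 : ℝ := (ω₁^2+ω₂^2+γ₁*γ₂)/2 - (γ₁+γ₂)^2/8 with hc0
  set Bd : ℝ := (γ₁^2/4)*(γ₁^2+ω₂^2) + (γ₂^2/4)*(γ₂^2+ω₁^2) with hBd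
  have hBdnn : 0 ≤ Bd := by rw [hBd]; positivity
  refine ⟨1 + Bd/((ω₁^2+ω₂^2) - (γ₁+γ₂)^2/8) + |2*c0 - (ω₁^2+ω₂^2)| + |c0^2 - ω₁^2*ω₂^2|, ?_, ?_⟩
  · have := abs_nonneg (2*c0 - (ω₁^2+ω₂^2))
    have := abs_nonneg (c0^2 - ω₁^2*ω₂^2)
    have : 0 ≤ Bd/((ω₁^2+ω₂^2) - (γ₁+γ₂)^2/8) := by positivity
    linarith
  intro k hk
  have hk0 : 0 < k := by
    have := abs_nonneg (2*c0 - (ω₁^2+ω₂^2))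
    have := abs_nonneg (c0^2 - ω₁^2*ω₂^2)
    have : 0 ≤ Bd/((ω₁^2+ω₂^2) - (γ₁+γ₂)^2/8) := by positivity
    linarith
  have hkm : k * ((ω₁^2+ω₂^2) - (γ₁+γ₂)^2/8) > Bd := by
    have hdlt : Bd/((ω₁^2+ω₂^2) - (γ₁+γ₂)^2/8) < k := by
      have := abs_nonneg (2*c0 - (ω₁^2+ω₂^2))
      have := abs_nonneg (c0^2 - ω₁^2*ω₂^2)
      linarith
    calc Bd = (Bd/((ω₁^2+ω₂^2) - (γ₁+γ₂)^2/8)) * ((ω₁^2+ω₂^2) - (γ₁+γ₂)^2/8) :=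
              (div_mul_cancel₀ Bd (ne_of_gt hmpos)).symm
      _ < k * ((ω₁^2+ω₂^2) - (γ₁+γ₂)^2/8) := mul_lt_mul_of_pos_right hdlt hmpos
  have hpos : ∀ x : ℝ, 0 < (x^2 + γ₁*x + (ω₁^2 + k)) * (x^2 + γ₂*x + (ω₂^2 + k)) - k^2 :=
    fun x => real_pos ω₁ ω₂ γ₁ γ₂ k x hω₁ hω₂ hγ₁ hγ₂ (by rw [← hBd]; exact hkm) hk0
  have hp := charpoly_explicit (-ω₁^2 - k) (-γ₁) k k (-ω₂^2 - k) (-γ₂)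
  have hev : ∀ x : ℝ, (Matrix.charpoly (!![0, 1, 0, 0;
         -ω₁^2 - k, -γ₁, k, 0;
         0, 0, 0, 1;
         k, 0, -ω₂^2 - k, -γ₂] : Matrix (Fin 4) (Fin 4) ℝ)).eval x
      = (x^2 + γ₁*x + (ω₁^2 + k)) * (x^2 + γ₂*x + (ω₂^2 + k)) - k^2 := by
    intro x; rw [hp]; simp; ring
  have hevC : ∀ zc : ℂ, aeval zc (Matrix.charpoly (!![0, 1, 0, 0;
         -ω₁^2 - k, -γ₁, k, 0;
         0, 0, 0, 1;
         k, 0, -ω₂^2 - k, -γ₂] : Matrix (Fin 4) (Fin 4) ℝ))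
      = (zc^2 + (γ₁:ℂ)*zc + ((ω₁:ℂ)^2 + (k:ℂ))) * (zc^2 + (γ₂:ℂ)*zc + ((ω₂:ℂ)^2 + (k:ℂ))) - (k:ℂ)^2 := by
    intro zc; rw [hp]
    simp only [map_sub, map_mul, map_add, map_pow, aeval_X, aeval_C, Complex.coe_algebraMap]
    push_cast
    ring
  set Q : ℂ[X] := (X^2 + C (γ₁:ℂ) * X + C ((ω₁:ℂ)^2 + (k:ℂ))) *
      (X^2 + C (γ₂:ℂ) * X + C ((ω₂:ℂ)^2 + (k:ℂ))) - C ((k:ℂ)^2) with hQdef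
  have hQev : ∀ zc : ℂ, Q.eval zc
      = (zc^2 + (γ₁:ℂ)*zc + ((ω₁:ℂ)^2 + (k:ℂ))) * (zc^2 + (γ₂:ℂ)*zc + ((ω₂:ℂ)^2 + (k:ℂ))) - (k:ℂ)^2 := by
    intro zc; rw [hQdef]; simp
  have hQmonic : Q.Monic := by rw [hQdef]; monicity!
  have hQdeg : Q.natDegree = 4 := by rw [hQdef]; compute_degree!
  have him : ∀ zc : ℂ, Q.eval zc = 0 → zc.im ≠ 0 := by
    intro zc h h0
    have hzre : zc = (zc.re : ℂ) := by
      apply Complex.ext <;> simp [h0]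
    rw [hQev, hzre] at h
    have hre : ((zc.re^2 + γ₁*zc.re + (ω₁^2 + k)) * (zc.re^2 + γ₂*zc.re + (ω₂^2 + k)) - k^2 : ℝ) = 0 := by
      exact_mod_cast h
    exact absurd hre (ne_of_gt (hpos zc.re))
  have hconj : ∀ zc : ℂ, Q.eval zc = 0 → Q.eval ((starRingEnd ℂ) zc) = 0 := by
    intro zc h
    rw [hQev] at h ⊢
    have : (((starRingEnd ℂ) zc)^2 + (γ₁:ℂ)*((starRingEnd ℂ) zc) + ((ω₁:ℂ)^2 + (k:ℂ))) *
        (((starRingEnd ℂ) zc)^2 + (γ₂:ℂ)*((starRingEnd ℂ) zc) + ((ω₂:ℂ)^2 + (k:ℂ))) - (k:ℂ)^2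
        = (starRingEnd ℂ) ((zc^2 + (γ₁:ℂ)*zc + ((ω₁:ℂ)^2 + (k:ℂ))) *
          (zc^2 + (γ₂:ℂ)*zc + ((ω₂:ℂ)^2 + (k:ℂ))) - (k:ℂ)^2) := by
      simp only [map_sub, map_mul, map_add, map_pow, Complex.conj_ofReal]
    rw [this, h, map_zero]
  obtain ⟨z, hzQ⟩ := IsAlgClosed.exists_root Q
    (by rw [degree_eq_natDegree hQmonic.ne_zero, hQdeg]; decide)
  have hzQ : Q.eval z = 0 := hzQ
  have himz : z.im ≠ 0 := him z hzQ
  have hzne : z ≠ (starRingEnd ℂ) z := by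
    intro h
    exact himz (Complex.conj_eq_iff_im.mp h.symm)
  constructor
  · intro x
    rw [hev x]
    exact ne_of_gt (hpos x)
  rcases em (∃ w : ℂ, Q.eval w = 0 ∧ w ≠ z ∧ w ≠ (starRingEnd ℂ) z) with ⟨w, hw, hwz, hwz'⟩ | hno
  · refine ⟨z, w, himz, him w hw, Ne.symm hwz, ?_, ?_, ?_⟩
    · intro h
      exact hwz' (by rw [h, Complex.conj_conj])
    · rw [hevC, ← hQev]; exact hzQ
    · rw [hevC, ← hQev]; exact hw
  · exfalso
    have hmem : ∀ w : ℂ, Q.eval w = 0 → w = z ∨ w = (starRingEnd ℂ) z := by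
      intro w hw
      by_contra hcon
      push_neg at hcon
      exact hno ⟨w, hw, hcon.1, hcon.2⟩
    obtain ⟨w1, w2, hfact⟩ := quartic_factor Q hQmonic hQdeg z ((starRingEnd ℂ) z)
      hzQ (hconj z hzQ) hzne
    have Heval : ∀ x : ℂ, (x^2 + (γ₁:ℂ)*x + ((ω₁:ℂ)^2 + (k:ℂ))) *
        (x^2 + (γ₂:ℂ)*x + ((ω₂:ℂ)^2 + (k:ℂ))) - (k:ℂ)^2
        = (x - z) * (x - (starRingEnd ℂ) z) * (x - w1) * (x - w2) := by
      intro x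
      rw [← hQev x, hfact]
      simp
    have hw1Q : Q.eval w1 = 0 := by rw [hfact]; simp
    have hw2Q : Q.eval w2 = 0 := by rw [hfact]; simp
    obtain ⟨hσ1, hσ2, hσ4⟩ := coeffs_of_roots (-((ω₁:ℂ)^2 + (k:ℂ))) (-(γ₁:ℂ))
      (-((ω₂:ℂ)^2 + (k:ℂ))) (-(γ₂:ℂ)) ((k:ℂ)^2) z ((starRingEnd ℂ) z) w1 w2
      (fun x => by linear_combination Heval x)
    have hBdmnn : 0 ≤ Bd/((ω₁^2+ω₂^2) - (γ₁+γ₂)^2/8) := by positivity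
    rcases hmem w1 hw1Q with h1 | h1 <;> rcases hmem w2 hw2Q with h2 | h2 <;>
      rw [h1, h2] at hσ1 hσ2 hσ4
    · -- w1 = z, w2 = z : roots z,conj z,z,z
      have himeq := congrArg Complex.im hσ1
      simp [Complex.add_im, Complex.conj_im, Complex.neg_im, Complex.ofReal_im] at himeq
      exact himz (by linarith)
    · -- w1 = z, w2 = conj z : mixed
      have e3 : 2*(z + (starRingEnd ℂ) z) = -((γ₁:ℂ) + (γ₂:ℂ)) := by linear_combination hσ1
      have e2 : (z + (starRingEnd ℂ) z)^2 + 2*(z * (starRingEnd ℂ) z)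
          = (γ₁:ℂ)*(γ₂:ℂ) + (ω₁:ℂ)^2 + (ω₂:ℂ)^2 + 2*(k:ℂ) := by linear_combination hσ2
      have e0 : (z * (starRingEnd ℂ) z)^2 = ((ω₁:ℂ)^2+(k:ℂ))*((ω₂:ℂ)^2+(k:ℂ)) - (k:ℂ)^2 := by
        linear_combination hσ4
      have hfinal := mixed_case ω₁ ω₂ γ₁ γ₂ k z e3 e2 e0
      exact final_contradiction (ω₁^2+ω₂^2) (ω₁^2*ω₂^2) c0 k (by linarith)
        (by rw [hc0]; linear_combination hfinal)
    · -- w1 = conj z, w2 = z : mixed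
      have e3 : 2*(z + (starRingEnd ℂ) z) = -((γ₁:ℂ) + (γ₂:ℂ)) := by linear_combination hσ1
      have e2 : (z + (starRingEnd ℂ) z)^2 + 2*(z * (starRingEnd ℂ) z)
          = (γ₁:ℂ)*(γ₂:ℂ) + (ω₁:ℂ)^2 + (ω₂:ℂ)^2 + 2*(k:ℂ) := by linear_combination hσ2
      have e0 : (z * (starRingEnd ℂ) z)^2 = ((ω₁:ℂ)^2+(k:ℂ))*((ω₂:ℂ)^2+(k:ℂ)) - (k:ℂ)^2 := by
        linear_combination hσ4
      have hfinal := mixed_case ω₁ ω₂ γ₁ γ₂ k z e3 e2 e0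
      exact final_contradiction (ω₁^2+ω₂^2) (ω₁^2*ω₂^2) c0 k (by linarith)
        (by rw [hc0]; linear_combination hfinal)
    · -- w1 = conj z, w2 = conj z
      have himeq := congrArg Complex.im hσ1
      simp [Complex.add_im, Complex.conj_im, Complex.neg_im, Complex.ofReal_im] at himeq
      exact himz (by linarith)
end

section
/- If (a,b,c,d) solves the invariance equations for parameter k, then every eigenvalue ξ of the 2×2 matrix M = [[0,1],[-Ω₁²,-Γ₁]], with Ω₁² = ω₁²+k(1-a) and Γ₁ = γ₁-kb, is also an eigenvalue of the 4×4 matrix Q(k). -/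
/-!
Write `Q(k)` in 2×2 blocks `!![Q₁₁, K; K, Q₂₂]` and `X = !![a, b; c, d]`. The invariance
equations say exactly that the lower-left block of `P⁻¹ Q(k) P` vanishes, where
`P = !![1, 0; X, 1]`, i.e. that the graph of `X` is `Q(k)`-invariant. Then `P⁻¹ Q(k) P` is block
upper triangular with upper-left block `Q₁₁ + K X = M`, so the characteristic polynomial of `M`
divides that of `Q(k)`.
-/

open Polynomial

namespace Matrix

variable {m n R : Type*} [Fintype m] [Fintype n] [DecidableEq m] [DecidableEq n] [CommRing R]

theorem charpoly_fromBlocks_of_mul_eq (A : Matrix m m R) (B : Matrix m n R) (C : Matrix n m R)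
    (D : Matrix n n R) (X : Matrix n m R) (hX : C + D * X = X * (A + B * X)) :
    (fromBlocks A B C D).charpoly = (A + B * X).charpoly * (D - X * B).charpoly := by
  set P : Matrix (m ⊕ n) (m ⊕ n) R := fromBlocks 1 0 X 1
  set P' : Matrix (m ⊕ n) (m ⊕ n) R := fromBlocks 1 0 (-X) 1
  have hPP' : P * P' = 1 := by simp [P, P', fromBlocks_multiply]
  have hconj : P' * fromBlocks A B C D * P = fromBlocks (A + B * X) B 0 (D - X * B) := by
    simp only [P, P', fromBlocks_multiply, Matrix.one_mul, Matrix.mul_one, Matrix.zero_mul,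
      Matrix.mul_zero, Matrix.neg_mul, zero_add, add_zero]
    congr 1
    · rw [← sub_eq_zero.2 hX]
      simp only [Matrix.add_mul, Matrix.mul_add, Matrix.neg_mul, Matrix.mul_assoc]
      abel
    · abel
  calc (fromBlocks A B C D).charpoly = (P * (P' * fromBlocks A B C D)).charpoly := by
        rw [← Matrix.mul_assoc, hPP', Matrix.one_mul]
    _ = (P' * fromBlocks A B C D * P).charpoly := charpoly_mul_comm _ _
    _ = _ := by rw [hconj, charpoly_fromBlocks_zero₂₁]

end Matrix

theorem eigenvalues_of_reduced_matrix_are_eigenvalues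
    (γ₁ γ₂ ω₁ ω₂ k : ℝ) (a b c d : ℝ)
    (h1 : c + (ω₁^2 + k) * b - k * a * b = 0)
    (h2 : a - γ₁ * b + k * b^2 - d = 0)
    (h3 : (ω₂^2 + k) * a - k + γ₂ * c - (ω₁^2 + k) * d + k * a * d = 0)
    (h4 : (ω₂^2 + k) * b + γ₂ * d + c - γ₁ * d + k * b * d = 0) :
    ∀ ξ : ℂ,
      aeval ξ (Matrix.charpoly (!![0, 1;
        -(ω₁^2 + k * (1 - a)), -(γ₁ - k * b)] : Matrix (Fin 2) (Fin 2) ℝ)) = 0 →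
      aeval ξ (Matrix.charpoly (!![0, 1, 0, 0;
        -ω₁^2 - k, -γ₁, k, 0;
        0, 0, 0, 1;
        k, 0, -ω₂^2 - k, -γ₂] : Matrix (Fin 4) (Fin 4) ℝ)) = 0 := by
  intro ξ hξ
  set Q₁₁ : Matrix (Fin 2) (Fin 2) ℝ := !![0, 1; -ω₁^2 - k, -γ₁]
  set Q₂₂ : Matrix (Fin 2) (Fin 2) ℝ := !![0, 1; -ω₂^2 - k, -γ₂]
  set K : Matrix (Fin 2) (Fin 2) ℝ := !![0, 0; k, 0]
  set X : Matrix (Fin 2) (Fin 2) ℝ := !![a, b; c, d]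
  have hQ : (!![0, 1, 0, 0; -ω₁^2 - k, -γ₁, k, 0; 0, 0, 0, 1; k, 0, -ω₂^2 - k, -γ₂] :
      Matrix (Fin 4) (Fin 4) ℝ) = Matrix.reindex finSumFinEquiv finSumFinEquiv
        (Matrix.fromBlocks Q₁₁ K K Q₂₂) := by
    ext i j; fin_cases i <;> fin_cases j <;> rfl
  have hM : (!![0, 1; -(ω₁^2 + k * (1 - a)), -(γ₁ - k * b)] : Matrix (Fin 2) (Fin 2) ℝ)
      = Q₁₁ + K * X := by
    ext i j; fin_cases i <;> fin_cases j <;> simp [Q₁₁, K, X] <;> ring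
  have hX : K + Q₂₂ * X = X * (Q₁₁ + K * X) := by
    ext i j; fin_cases i <;> fin_cases j <;> simp [Q₁₁, Q₂₂, K, X] <;> linarith
  rw [hQ, Matrix.charpoly_reindex, Matrix.charpoly_fromBlocks_of_mul_eq _ _ _ _ X hX, ← hM,
    map_mul, hξ, zero_mul]
end

section
/- The overdamped invariance equations ā²+b̄c̄+ω₁²+k+γ₁ā = 0, āb̄+b̄d̄-k+γ₁b̄ = 0, āc̄+c̄d̄-k+γ₂c̄ = 0, b̄c̄+d̄²+ω₂²+k+γ₂d̄ = 0 hold if and only if the subspace {(x₁, āx₁+b̄x₂, x₂, c̄x₁+d̄x₂) : x₁,x₂ ∈ ℝ} ⊆ ℝ⁴ is invariant under Q(k). -/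
theorem overdamped_invariance_equations_iff_invariant_subspace
    (γ₁ γ₂ ω₁ ω₂ k : ℝ) (a b c d : ℝ) :
    (a^2 + b*c + ω₁^2 + k + γ₁*a = 0 ∧
     a*b + b*d - k + γ₁*b = 0 ∧
     a*c + c*d - k + γ₂*c = 0 ∧
     b*c + d^2 + ω₂^2 + k + γ₂*d = 0) ↔
    (∀ x₁ x₂ : ℝ,
      let y := (!![0, 1, 0, 0;
        -ω₁^2 - k, -γ₁, k, 0;
        0, 0, 0, 1;
        k, 0, -ω₂^2 - k, -γ₂] : Matrix (Fin 4) (Fin 4) ℝ).mulVec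
          ![x₁, a*x₁ + b*x₂, x₂, c*x₁ + d*x₂]
      y 1 = a * y 0 + b * y 2 ∧ y 3 = c * y 0 + d * y 2) := by
  constructor
  · rintro ⟨h1, h2, h3, h4⟩ x₁ x₂
    simp only [Matrix.mulVec, dotProduct, Fin.sum_univ_four, Matrix.of_apply,
      Matrix.cons_val', Matrix.cons_val_zero, Matrix.cons_val_one, Matrix.head_cons,
      Matrix.empty_val', Matrix.cons_val_fin_one, Matrix.head_fin_const,
      Matrix.cons_val_two, Matrix.tail_cons, Matrix.cons_val_three]
    constructor
    · linear_combination (-x₁)*h1 - x₂*h2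
    · linear_combination (-x₁)*h3 - x₂*h4
  · intro h
    have h10 := h 1 0
    have h01 := h 0 1
    simp only [Matrix.mulVec, dotProduct, Fin.sum_univ_four, Matrix.of_apply,
      Matrix.cons_val', Matrix.cons_val_zero, Matrix.cons_val_one, Matrix.head_cons,
      Matrix.empty_val', Matrix.cons_val_fin_one, Matrix.head_fin_const,
      Matrix.cons_val_two, Matrix.tail_cons, Matrix.cons_val_three] at h10 h01
    obtain ⟨e1, e2⟩ := h10
    obtain ⟨e3, e4⟩ := h01
    exact ⟨by linear_combination -e1, by linear_combination -e3,
      by linear_combination -e2, by linear_combination -e4⟩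
end

section
/- If (ā,b̄,c̄,d̄) solves the overdamped invariance equations, then each eigenvalue of the 2×2 matrix P = [[ā,b̄],[c̄,d̄]] is an eigenvalue of Q(k). -/
/-!
The invariance equations say exactly that `P = !![a, b; c, d]` is a right solvent of the quadratic
matrix polynomial `λ² + Γλ + K`, where `Γ` is the damping and `K` the stiffness matrix, and `Q(k)`
is, after reordering coordinates, the block companion matrix `[[0, 1], [-K, -Γ]]` of that
polynomial. Conjugating the companion matrix by `[[1, 0], [P, 1]]` makes it block upper triangular
with diagonal blocks `P` and `-(P + Γ)`, so `χ_Q = χ_P · χ_{-(P+Γ)}` and every root of `χ_P` is a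
root of `χ_Q`.
-/

open Polynomial

namespace Matrix

variable {R n : Type*} [CommRing R] [Fintype n] [DecidableEq n]

def quadraticCompanion (G K : Matrix n n R) : Matrix (n ⊕ n) (n ⊕ n) R :=
  fromBlocks 0 1 (-K) (-G)

def IsRightSolvent (G K P : Matrix n n R) : Prop :=
  P * P + G * P + K = 0

theorem IsRightSolvent.conj_quadraticCompanion {G K P : Matrix n n R} (hP : IsRightSolvent G K P) :
    fromBlocks 1 0 (-P) 1 * quadraticCompanion G K * fromBlocks 1 0 P 1 =
      fromBlocks P 1 0 (-(P + G)) := by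
  have hK : K = -(P * P) - G * P := by rw [← sub_eq_zero, ← hP]; abel
  simp only [quadraticCompanion, fromBlocks_multiply, hK]
  congr 1 <;> noncomm_ring

theorem IsRightSolvent.charpoly_quadraticCompanion {G K P : Matrix n n R}
    (hP : IsRightSolvent G K P) :
    (quadraticCompanion G K).charpoly = P.charpoly * (-(P + G)).charpoly := by
  have hinv : fromBlocks 1 0 P 1 * fromBlocks 1 0 (-P) 1 = (1 : Matrix (n ⊕ n) (n ⊕ n) R) := by
    simp [fromBlocks_multiply, fromBlocks_one]
  rw [← charpoly_fromBlocks_zero₂₁ P 1 (-(P + G)), ← hP.conj_quadraticCompanion,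
    charpoly_mul_comm, ← Matrix.mul_assoc, hinv, Matrix.one_mul]

end Matrix

def dampingMatrix (γ₁ γ₂ : ℝ) : Matrix (Fin 2) (Fin 2) ℝ := !![γ₁, 0; 0, γ₂]

def stiffnessMatrix (ω₁ ω₂ k : ℝ) : Matrix (Fin 2) (Fin 2) ℝ := !![ω₁^2 + k, -k; -k, ω₂^2 + k]

-- `Q(k)` uses the coordinates `(x₁, v₁, x₂, v₂)`; the companion matrix groups them as `(x, v)`.
def positionVelocityEquiv : Fin 2 ⊕ Fin 2 ≃ Fin 4 where
  toFun := Sum.elim ![0, 2] ![1, 3]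
  invFun := ![.inl 0, .inr 0, .inl 1, .inr 1]
  left_inv := by decide
  right_inv := by decide

theorem reindex_quadraticCompanion_damping_stiffness (γ₁ γ₂ ω₁ ω₂ k : ℝ) :
    (Matrix.quadraticCompanion (dampingMatrix γ₁ γ₂) (stiffnessMatrix ω₁ ω₂ k)).reindex
        positionVelocityEquiv positionVelocityEquiv =
      !![0, 1, 0, 0;
        -ω₁^2 - k, -γ₁, k, 0;
        0, 0, 0, 1;
        k, 0, -ω₂^2 - k, -γ₂] := by
  ext i j
  fin_cases i <;> fin_cases j <;>
    simp [Matrix.quadraticCompanion, dampingMatrix, stiffnessMatrix, positionVelocityEquiv] <;> ring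

theorem isRightSolvent_of_invariance_equations {γ₁ γ₂ ω₁ ω₂ k a b c d : ℝ}
    (h1 : a^2 + b*c + ω₁^2 + k + γ₁*a = 0)
    (h2 : a*b + b*d - k + γ₁*b = 0)
    (h3 : a*c + c*d - k + γ₂*c = 0)
    (h4 : b*c + d^2 + ω₂^2 + k + γ₂*d = 0) :
    Matrix.IsRightSolvent (dampingMatrix γ₁ γ₂) (stiffnessMatrix ω₁ ω₂ k) !![a, b; c, d] := by
  have hP : !![a, b; c, d] * !![a, b; c, d] + dampingMatrix γ₁ γ₂ * !![a, b; c, d] +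
      stiffnessMatrix ω₁ ω₂ k =
        !![a^2 + b*c + ω₁^2 + k + γ₁*a, a*b + b*d - k + γ₁*b;
          a*c + c*d - k + γ₂*c, b*c + d^2 + ω₂^2 + k + γ₂*d] := by
    ext i j
    fin_cases i <;> fin_cases j <;> simp [dampingMatrix, stiffnessMatrix] <;> ring
  rw [Matrix.IsRightSolvent, hP, h1, h2, h3, h4]
  exact (Matrix.eta_fin_two 0).symm

theorem eigenvalues_of_overdamped_reduced_matrix_are_eigenvalues
    (γ₁ γ₂ ω₁ ω₂ k : ℝ) (a b c d : ℝ)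
    (h1 : a^2 + b*c + ω₁^2 + k + γ₁*a = 0)
    (h2 : a*b + b*d - k + γ₁*b = 0)
    (h3 : a*c + c*d - k + γ₂*c = 0)
    (h4 : b*c + d^2 + ω₂^2 + k + γ₂*d = 0) :
    ∀ ζ : ℂ,
      aeval ζ (Matrix.charpoly (!![a, b; c, d] : Matrix (Fin 2) (Fin 2) ℝ)) = 0 →
      aeval ζ (Matrix.charpoly (!![0, 1, 0, 0;
        -ω₁^2 - k, -γ₁, k, 0;
        0, 0, 0, 1;
        k, 0, -ω₂^2 - k, -γ₂] : Matrix (Fin 4) (Fin 4) ℝ)) = 0 := by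
  intro ζ hζ
  rw [← reindex_quadraticCompanion_damping_stiffness, Matrix.charpoly_reindex,
    (isRightSolvent_of_invariance_equations h1 h2 h3 h4).charpoly_quadraticCompanion,
    map_mul, hζ, zero_mul]
end

section
/- With λ⁻ = λ₁⁻ = -(γ₁-√(γ₁²-4ω₁²))/2 and λ₂⁻ = -(γ₂-√(γ₂²-4ω₂²))/2, the first-order Chapman-Enskog coefficients ā₁ = -1/√(γ₁²-4ω₁²), b̄₁ = 2/(γ₁-γ₂+S), c̄₁ = 2/(γ₂-γ₁+S), d̄₁ = -1/√(γ₂²-4ω₂²), with S = √(γ₁²-4ω₁²)+√(γ₂²-4ω₂²), satisfy the linearization of the overdamped invariance equations around (ā₀,0,0,d̄₀): (2ā₀+γ₁)ā₁+1 = 0, (ā₀+d̄₀+γ₁)b̄₁-1 = 0, (ā₀+d̄₀+γ₂)c̄₁-1 = 0, (2d̄₀+γ₂)d̄₁+1 = 0. -/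
theorem first_order_overdamped_coefficients
    (γ₁ γ₂ ω₁ ω₂ : ℝ) (hω₁ : 0 < ω₁) (hω₂ : 0 < ω₂) (hγ₁ : 0 < γ₁) (hγ₂ : 0 < γ₂)
    (h1 : γ₁^2 - 4*ω₁^2 > 0) (h2 : γ₂^2 - 4*ω₂^2 > 0)
    (S : ℝ) (hS : S = Real.sqrt (γ₁^2 - 4*ω₁^2) + Real.sqrt (γ₂^2 - 4*ω₂^2))
    (hden1 : γ₁ - γ₂ + S ≠ 0) (hden2 : γ₂ - γ₁ + S ≠ 0)
    (a₀ d₀ a₁ b₁ c₁ d₁ : ℝ)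
    (ha₀ : a₀ = -(γ₁ - Real.sqrt (γ₁^2 - 4*ω₁^2)) / 2)
    (hd₀ : d₀ = -(γ₂ - Real.sqrt (γ₂^2 - 4*ω₂^2)) / 2)
    (ha₁ : a₁ = -1 / Real.sqrt (γ₁^2 - 4*ω₁^2))
    (hb₁ : b₁ = 2 / (γ₁ - γ₂ + S))
    (hc₁ : c₁ = 2 / (γ₂ - γ₁ + S))
    (hd₁ : d₁ = -1 / Real.sqrt (γ₂^2 - 4*ω₂^2)) :
    (2*a₀ + γ₁)*a₁ + 1 = 0 ∧
    (a₀ + d₀ + γ₁)*b₁ - 1 = 0 ∧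
    (a₀ + d₀ + γ₂)*c₁ - 1 = 0 ∧
    (2*d₀ + γ₂)*d₁ + 1 = 0 := by
  have s1 : Real.sqrt (γ₁^2 - 4*ω₁^2) > 0 := Real.sqrt_pos.mpr h1
  have s2 : Real.sqrt (γ₂^2 - 4*ω₂^2) > 0 := Real.sqrt_pos.mpr h2
  subst ha₀ hd₀ ha₁ hb₁ hc₁ hd₁ hS
  refine ⟨?_, ?_, ?_, ?_⟩ <;> field_simp <;> ring
end
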